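/- Let 0 ≤ α < 1/2, N a positive integer, h = 2π/(2N+1), and let x̃_{−N},…,x̃_N be a set of α-perturbed nodes. Fix −N ≤ j ≤ N and for −N ≤ k ≤ N set x_k = x̃_j + (k−j)h, and let d(j,k) = min{|j−k|, 2N+1−|j−k|}. Then for every k ≠ j, |∏_{m=−N, m≠j,k}^{N} sin((x_k − x̃_m)/2) / ∏_{m=−N, m≠j}^{N} sin((x̃_j − x̃_m)/2)| ≤ (1/sin(d(j,k)h/2)) · ∏_{m=1}^{N} [sin²((mh + αh)/2) / (sin((mh − 2αh)/2) sin(mh/2))]. -/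

import Mathlib

open Real Finset

/-- `x` is a set of α-perturbed nodes of size 2N+1. -/
def PerturbedNodes (N : ℕ) (α : ℝ) (x : ℤ → ℝ) : Prop :=
  ∀ j ∈ Finset.Icc (-(N:ℤ)) (N:ℤ),
    |x j - (j : ℝ) * (2*π/(2*N+1))| ≤ α * (2*π/(2*N+1))

/-!
Write `t = π / (2N + 1)`, so `h = 2t` and `x m = 2mt + e m` with `|e m| ≤ 2αt`. Every factor is
`sin ((c - m) t + v m)` with `v m = (e j - e m) / 2` and `c = k` (numerator) or `c = j`
(denominator). As `(2N + 1) t = π`, its absolute value depends on `c - m` only modulo `2N + 1`, so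
the indices `m ≠ c` pair up as `c ∓ d` for `1 ≤ d ≤ N`, with pair factors
`|sin (dt + a)| * |sin (dt - b)|` where `|a|, |b|, |a - b| ≤ 2αt`. At fixed `x + y`, `sin x * sin y`
grows as `x` and `y` get closer; this bounds a pair above by `sin ((d + α) t) ^ 2` and below by
`sin ((d - 2α) t) * sin (dt)`. The numerator is the full product for `c = k` without its factor at
`m = j`, which is `|sin ((k - j) t)| = sin (d(j, k) t)`.
-/

theorem sin_mul_sin_eq (x y : ℝ) : sin x * sin y = (cos (x - y) - cos (x + y)) / 2 := by
  rw [cos_sub, cos_add]; ring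

theorem sin_le_sin_of_le_of_le_pi_sub {x y : ℝ} (hx : 0 ≤ x) (hxy : x ≤ y) (hy : y ≤ π - x) :
    sin x ≤ sin y := by
  rcases le_total y (π / 2) with h | h
  · exact sin_le_sin_of_le_of_le_pi_div_two (by linarith [pi_pos]) h hxy
  · rw [← sin_pi_sub y]
    exact sin_le_sin_of_le_of_le_pi_div_two (by linarith [pi_pos]) (by linarith) (by linarith)

theorem sin_mul_sin_le_sin_sq {x y w : ℝ} (h0 : 0 ≤ x + y) (hw : x + y ≤ 2 * w)
    (hw' : w ≤ π / 2) : sin x * sin y ≤ sin w ^ 2 := by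
  have hmid : sin ((x + y) / 2) ≤ sin w :=
    sin_le_sin_of_le_of_le_pi_div_two (by linarith [pi_pos]) hw' (by linarith)
  have hmid0 : 0 ≤ sin ((x + y) / 2) :=
    sin_nonneg_of_nonneg_of_le_pi (by linarith) (by linarith)
  calc sin x * sin y = (cos (x - y) - cos (2 * ((x + y) / 2))) / 2 := by
        rw [sin_mul_sin_eq]; ring_nf
    _ ≤ (1 - cos (2 * ((x + y) / 2))) / 2 := by linarith [cos_le_one (x - y)]
    _ = sin ((x + y) / 2) ^ 2 := by rw [cos_two_mul, cos_sq']; ring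
    _ ≤ sin w ^ 2 := pow_le_pow_left₀ hmid0 hmid 2

theorem sin_mul_sin_le_sin_mul_sin_of_add_eq {u w u' w' : ℝ} (hsum : u + w = u' + w')
    (hdiff : |u' - w'| ≤ |u - w|) (hπ : |u - w| ≤ π) : sin u * sin w ≤ sin u' * sin w' := by
  have := cos_le_cos_of_nonneg_of_le_pi (abs_nonneg _) hπ hdiff
  rw [cos_abs, cos_abs] at this
  rw [sin_mul_sin_eq, sin_mul_sin_eq, hsum]
  linarith

theorem sin_sub_mul_sin_le_sin_add_mul_sin_add {D β a b : ℝ} (hβ : 0 ≤ β) (hβD : β ≤ D)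
    (hDβ : 2 * D + β ≤ π) (ha : |a| ≤ β) (hb : |b| ≤ β) (hab : |a + b| ≤ β) :
    sin (D - β) * sin D ≤ sin (D + a) * sin (D + b) := by
  wlog hle : a ≤ b generalizing a b
  · rw [mul_comm (sin (D + a))]
    exact this hb ha (by rwa [add_comm]) (by linarith)
  rw [abs_le] at ha hb hab
  rcases le_or_gt 0 b with hb0 | hb0
  · exact mul_le_mul (sin_le_sin_of_le_of_le_pi_sub (by linarith) (by linarith) (by linarith))
      (sin_le_sin_of_le_of_le_pi_sub (by linarith) (by linarith) (by linarith))
      (sin_nonneg_of_nonneg_of_le_pi (by linarith) (by linarith))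
      (sin_nonneg_of_nonneg_of_le_pi (by linarith) (by linarith))
  · -- lower `b` to `-β - a`, then rebalance at the fixed sum `2D - β`
    calc sin (D - β) * sin D ≤ sin (D + a) * sin (D - β - a) :=
          sin_mul_sin_le_sin_mul_sin_of_add_eq (by ring)
            (by rw [show D + a - (D - β - a) = 2 * a + β by ring, show D - β - D = -β by ring,
              abs_neg, abs_of_nonneg hβ, abs_le]; constructor <;> linarith)
            (by rw [show D - β - D = -β by ring, abs_neg, abs_of_nonneg hβ]; linarith)
      _ ≤ sin (D + a) * sin (D + b) :=
          mul_le_mul_of_nonneg_left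
            (sin_le_sin_of_le_of_le_pi_div_two (by linarith [pi_pos]) (by linarith) (by linarith))
            (sin_nonneg_of_nonneg_of_le_pi (by linarith) (by linarith))

theorem abs_half_sub_le {a b β : ℝ} (ha : |a| ≤ β) (hb : |b| ≤ β) : |(a - b) / 2| ≤ β := by
  rw [abs_le] at *; constructor <;> linarith

theorem abs_sin_add_int_mul_pi (x : ℝ) (q : ℤ) : |sin (x + q * π)| = |sin x| := by
  rw [sin_add_int_mul_pi, abs_mul, abs_neg_one_zpow, one_mul]

section Grid

variable {N : ℕ}

-- `z.bmod (2 * N + 1)` is the representative of `z` modulo `2N + 1` in the index range `[-N, N]`.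

theorem bmod_mem_Icc (z : ℤ) : z.bmod (2 * N + 1) ∈ Icc (-(N : ℤ)) N := by
  have h1 := Int.le_bmod (x := z) (m := 2 * N + 1) (by omega)
  have h2 := Int.bmod_lt (x := z) (m := 2 * N + 1) (by omega)
  rw [mem_Icc]; omega

theorem bmod_eq_self_of_mem_Icc {z : ℤ} (hz : z ∈ Icc (-(N : ℤ)) N) :
    z.bmod (2 * N + 1) = z := by
  rw [mem_Icc] at hz
  exact Int.bmod_eq_of_le (by omega) (by omega)

theorem bmod_sub_bmod_sub (c : ℤ) {m : ℤ} (hm : m ∈ Icc (-(N : ℤ)) N) :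
    (c - (c - m).bmod (2 * N + 1)).bmod (2 * N + 1) = m := by
  rw [Int.sub_bmod_bmod, sub_sub_cancel, bmod_eq_self_of_mem_Icc hm]

theorem prod_erase_eq_prod_erase_zero_bmod {M : Type*} [CommMonoid M] (f : ℤ → M) {c : ℤ}
    (hc : c ∈ Icc (-(N : ℤ)) N) :
    ∏ m ∈ (Icc (-(N : ℤ)) N).erase c, f m =
      ∏ w ∈ (Icc (-(N : ℤ)) N).erase 0, f ((c - w).bmod (2 * N + 1)) := by
  refine prod_nbij' (fun m => (c - m).bmod (2 * N + 1)) (fun w => (c - w).bmod (2 * N + 1))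
    ?_ ?_ (fun m hm => bmod_sub_bmod_sub c (mem_of_mem_erase hm))
    (fun w hw => bmod_sub_bmod_sub c (mem_of_mem_erase hw))
    (fun m hm => by rw [bmod_sub_bmod_sub c (mem_of_mem_erase hm)])
  · intro m hm
    rw [mem_erase] at hm ⊢
    refine ⟨fun h0 => hm.1 ?_, bmod_mem_Icc _⟩
    rw [← bmod_sub_bmod_sub c hm.2, h0, sub_zero, bmod_eq_self_of_mem_Icc hc]
  · intro w hw
    rw [mem_erase] at hw ⊢
    refine ⟨fun hc' => hw.1 ?_, bmod_mem_Icc _⟩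
    rw [← bmod_sub_bmod_sub c hw.2, hc', sub_self, Int.zero_bmod]

theorem prod_Icc_erase_zero {M : Type*} [CommMonoid M] (f : ℤ → M) :
    ∏ w ∈ (Icc (-(N : ℤ)) N).erase 0, f w = ∏ d ∈ Icc 1 N, f d * f (-d) := by
  rw [prod_mul_distrib, ← prod_image (s := Icc 1 N) (g := fun d : ℕ => (d : ℤ)) (by simp),
    ← prod_image (s := Icc 1 N) (g := fun d : ℕ => -(d : ℤ)) (by simp), ← prod_union]
  · congr 1
    ext w
    simp only [mem_erase, mem_Icc, mem_union, mem_image]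
    constructor
    · rintro ⟨hw0, hlo, hhi⟩
      rcases lt_or_gt_of_ne hw0 with h | h
      · exact Or.inr ⟨w.natAbs, by omega, by omega⟩
      · exact Or.inl ⟨w.natAbs, by omega, by omega⟩
    · rintro (⟨d, hd, rfl⟩ | ⟨d, hd, rfl⟩) <;> omega
  · rw [disjoint_left]
    simp only [mem_image, mem_Icc]
    rintro _ ⟨d, hd, rfl⟩ ⟨d', hd', h⟩
    omega

theorem prod_erase_eq_prod_pairs {M : Type*} [CommMonoid M] (f : ℤ → M) {c : ℤ}
    (hc : c ∈ Icc (-(N : ℤ)) N) :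
    ∏ m ∈ (Icc (-(N : ℤ)) N).erase c, f m =
      ∏ d ∈ Icc 1 N, f ((c - d).bmod (2 * N + 1)) * f ((c + d).bmod (2 * N + 1)) := by
  simp only [prod_erase_eq_prod_erase_zero_bmod f hc, prod_Icc_erase_zero, sub_neg_eq_add]

end Grid

section Lattice

variable {N : ℕ} {t α : ℝ}

theorem abs_sin_sub_bmod_mul_add (ht : (2 * N + 1) * t = π) (c w : ℤ) (v : ℝ) :
    |sin ((c - ((c - w).bmod (2 * N + 1) : ℤ)) * t + v)| = |sin (w * t + v)| := by
  rw [Int.bmod_eq_self_sub_mul_bdiv,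
    ← abs_sin_add_int_mul_pi (w * t + v) ((c - w).bdiv (2 * N + 1))]
  congr 2
  push_cast
  linear_combination ((c - w).bdiv (2 * N + 1) : ℝ) * ht

theorem prod_abs_sin_eq_prod_pairs (ht : (2 * N + 1) * t = π) (v : ℤ → ℝ) {c : ℤ}
    (hc : c ∈ Icc (-(N : ℤ)) N) :
    ∏ m ∈ (Icc (-(N : ℤ)) N).erase c, |sin ((c - m) * t + v m)| =
      ∏ d ∈ Icc 1 N, |sin (d * t + v ((c - d).bmod (2 * N + 1)))| *
        |sin (d * t - v ((c + d).bmod (2 * N + 1)))| := by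
  rw [prod_erase_eq_prod_pairs (fun m => |sin ((c - m) * t + v m)|) hc]
  refine prod_congr rfl fun d _ => ?_
  have hminus := abs_sin_sub_bmod_mul_add ht c d (v ((c - d).bmod (2 * N + 1)))
  have hplus := abs_sin_sub_bmod_mul_add ht c (-d) (v ((c + d).bmod (2 * N + 1)))
  rw [sub_neg_eq_add] at hplus
  rw [← abs_neg (sin (_ - _)), ← sin_neg]
  push_cast at hminus hplus ⊢
  rw [hminus, hplus]
  ring_nf

theorem lattice_bounds (ht : (2 * N + 1) * t = π) (hα0 : 0 ≤ α) (hα : α < 1 / 2) {d : ℕ}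
    (hd : d ∈ Icc 1 N) : 0 ≤ α * t ∧ 2 * (α * t) < t ∧ t ≤ d * t ∧ 2 * (d * t) + t ≤ π := by
  have ht0 : 0 < t := by nlinarith [pi_pos]
  rw [mem_Icc] at hd
  have hd1 : (1 : ℝ) ≤ d := by exact_mod_cast hd.1
  have hdN : (d : ℝ) ≤ N := by exact_mod_cast hd.2
  refine ⟨by positivity, by nlinarith, by nlinarith, by nlinarith⟩

theorem sin_sub_mul_sin_pos (ht : (2 * N + 1) * t = π) (hα0 : 0 ≤ α) (hα : α < 1 / 2) {d : ℕ}
    (hd : d ∈ Icc 1 N) : 0 < sin (d * t - 2 * α * t) * sin (d * t) := by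
  obtain ⟨hα0, hα, hd1, hdN⟩ := lattice_bounds ht hα0 hα hd
  exact mul_pos (sin_pos_of_pos_of_lt_pi (by linarith) (by linarith))
    (sin_pos_of_pos_of_lt_pi (by linarith) (by linarith))

theorem abs_sin_mul_abs_sin_le (ht : (2 * N + 1) * t = π) (hα0 : 0 ≤ α) (hα : α < 1 / 2)
    {d : ℕ} (hd : d ∈ Icc 1 N) {a b : ℝ} (ha : |a| ≤ 2 * α * t) (hb : |b| ≤ 2 * α * t)
    (hab : |a - b| ≤ 2 * α * t) :
    |sin (d * t + a)| * |sin (d * t - b)| ≤ sin (d * t + α * t) ^ 2 := by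
  obtain ⟨hα0, hα, hd1, hdN⟩ := lattice_bounds ht hα0 hα hd
  rw [abs_le] at ha hb hab
  rw [abs_of_nonneg (sin_nonneg_of_nonneg_of_le_pi (by linarith) (by linarith)),
    abs_of_nonneg (sin_nonneg_of_nonneg_of_le_pi (by linarith) (by linarith))]
  exact sin_mul_sin_le_sin_sq (by linarith) (by linarith) (by linarith)

theorem sin_sub_mul_sin_le_abs_sin_mul_abs_sin (ht : (2 * N + 1) * t = π) (hα0 : 0 ≤ α)
    (hα : α < 1 / 2) {d : ℕ} (hd : d ∈ Icc 1 N) {a b : ℝ} (ha : |a| ≤ 2 * α * t)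
    (hb : |b| ≤ 2 * α * t) (hab : |a - b| ≤ 2 * α * t) :
    sin (d * t - 2 * α * t) * sin (d * t) ≤ |sin (d * t + a)| * |sin (d * t - b)| := by
  obtain ⟨hα0, hα, hd1, hdN⟩ := lattice_bounds ht hα0 hα hd
  have ha' := abs_le.mp ha
  have hb' := abs_le.mp hb
  rw [abs_of_nonneg (sin_nonneg_of_nonneg_of_le_pi (by linarith) (by linarith)),
    abs_of_nonneg (sin_nonneg_of_nonneg_of_le_pi (by linarith) (by linarith)),
    sub_eq_add_neg (d * t) b]
  exact sin_sub_mul_sin_le_sin_add_mul_sin_add (by linarith) (by linarith) (by linarith) ha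
    (by rwa [abs_neg]) (by rwa [← sub_eq_add_neg])

theorem prod_abs_sin_le (ht : (2 * N + 1) * t = π) (hα0 : 0 ≤ α) (hα : α < 1 / 2)
    {v : ℤ → ℝ} (hv : ∀ m ∈ Icc (-(N : ℤ)) N, |v m| ≤ 2 * α * t)
    (hvv : ∀ m ∈ Icc (-(N : ℤ)) N, ∀ m' ∈ Icc (-(N : ℤ)) N, |v m - v m'| ≤ 2 * α * t)
    {c : ℤ} (hc : c ∈ Icc (-(N : ℤ)) N) :
    ∏ m ∈ (Icc (-(N : ℤ)) N).erase c, |sin ((c - m) * t + v m)| ≤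
      ∏ d ∈ Icc 1 N, sin (d * t + α * t) ^ 2 := by
  rw [prod_abs_sin_eq_prod_pairs ht v hc]
  exact prod_le_prod (fun _ _ => by positivity) fun d hd =>
    abs_sin_mul_abs_sin_le ht hα0 hα hd (hv _ (bmod_mem_Icc _)) (hv _ (bmod_mem_Icc _))
      (hvv _ (bmod_mem_Icc _) _ (bmod_mem_Icc _))

theorem prod_sin_sub_mul_sin_le (ht : (2 * N + 1) * t = π) (hα0 : 0 ≤ α) (hα : α < 1 / 2)
    {v : ℤ → ℝ} (hv : ∀ m ∈ Icc (-(N : ℤ)) N, |v m| ≤ 2 * α * t)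
    (hvv : ∀ m ∈ Icc (-(N : ℤ)) N, ∀ m' ∈ Icc (-(N : ℤ)) N, |v m - v m'| ≤ 2 * α * t)
    {c : ℤ} (hc : c ∈ Icc (-(N : ℤ)) N) :
    ∏ d ∈ Icc 1 N, sin (d * t - 2 * α * t) * sin (d * t) ≤
      ∏ m ∈ (Icc (-(N : ℤ)) N).erase c, |sin ((c - m) * t + v m)| := by
  rw [prod_abs_sin_eq_prod_pairs ht v hc]
  exact prod_le_prod (fun d hd => (sin_sub_mul_sin_pos ht hα0 hα hd).le) fun d hd =>
    sin_sub_mul_sin_le_abs_sin_mul_abs_sin ht hα0 hα hd (hv _ (bmod_mem_Icc _))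
      (hv _ (bmod_mem_Icc _)) (hvv _ (bmod_mem_Icc _) _ (bmod_mem_Icc _))

theorem abs_sin_int_mul_pos (ht : (2 * N + 1) * t = π) {z : ℤ} (hz0 : z ≠ 0)
    (hz : |z| ≤ 2 * N) : 0 < |sin (z * t)| := by
  have ht0 : 0 < t := by nlinarith [pi_pos]
  have hzR : |(z : ℝ)| ≤ 2 * N := by exact_mod_cast hz
  have hzt := abs_le.mp hzR
  refine abs_pos.mpr fun h => hz0 ?_
  rw [sin_eq_zero_iff_of_lt_of_lt (by nlinarith) (by nlinarith)] at h
  exact_mod_cast (mul_eq_zero.mp h).resolve_right ht0.ne'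

/-- Since `(2N + 1) t = π`, both candidates for the circular distance give the same sine. -/
theorem sin_min_mul_eq_abs_sin (ht : (2 * N + 1) * t = π) {z : ℤ} (hz : |z| ≤ 2 * N) :
    sin ((min |z| (2 * N + 1 - |z|) : ℤ) * t) = |sin (z * t)| := by
  have ht0 : 0 < t := by nlinarith [pi_pos]
  have hzR : |(z : ℝ)| ≤ 2 * N := by exact_mod_cast hz
  have habs : |sin (z * t)| = sin (|(z : ℝ)| * t) := by
    have hnn : 0 ≤ sin (|(z : ℝ)| * t) :=
      sin_nonneg_of_nonneg_of_le_pi (by positivity) (by nlinarith)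
    rcases abs_choice (z : ℝ) with h | h <;> rw [h] at hnn ⊢
    · exact abs_of_nonneg hnn
    · rw [neg_mul, sin_neg] at hnn ⊢
      exact abs_of_nonpos (by linarith)
  rw [habs]
  rcases min_choice |z| (2 * N + 1 - |z|) with h | h <;> rw [h] <;> push_cast
  · rfl
  · rw [← sin_pi_sub, ← ht]; ring_nf

theorem abs_prod_div_prod_le (ht : (2 * N + 1) * t = π) (hα0 : 0 ≤ α) (hα : α < 1 / 2)
    {v : ℤ → ℝ} (hv : ∀ m ∈ Icc (-(N : ℤ)) N, |v m| ≤ 2 * α * t)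
    (hvv : ∀ m ∈ Icc (-(N : ℤ)) N, ∀ m' ∈ Icc (-(N : ℤ)) N, |v m - v m'| ≤ 2 * α * t)
    {j k : ℤ} (hj : j ∈ Icc (-(N : ℤ)) N) (hk : k ∈ Icc (-(N : ℤ)) N) (hkj : k ≠ j)
    (hvj : v j = 0) :
    |(∏ m ∈ ((Icc (-(N : ℤ)) N).erase j).erase k, sin ((k - m) * t + v m)) /
      ∏ m ∈ (Icc (-(N : ℤ)) N).erase j, sin ((j - m) * t + v m)| ≤
      1 / |sin ((k - j) * t)| *
        ∏ d ∈ Icc 1 N, sin (d * t + α * t) ^ 2 / (sin (d * t - 2 * α * t) * sin (d * t)) := by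
  have hkj' : |k - j| ≤ 2 * N := by
    rw [mem_Icc] at hj hk; rw [abs_le]; constructor <;> omega
  have hg0 := abs_sin_int_mul_pos ht (sub_ne_zero.mpr hkj) hkj'
  rw [Int.cast_sub] at hg0
  have hgA := prod_abs_sin_le ht hα0 hα hv hvv hk
  rw [← mul_prod_erase _ _ (mem_erase.mpr ⟨hkj.symm, hj⟩), hvj, add_zero] at hgA
  have hQB := prod_sin_sub_mul_sin_le ht hα0 hα hv hvv hj
  have hQ := prod_pos fun d hd => sin_sub_mul_sin_pos ht hα0 hα (N := N) hd
  rw [abs_div, abs_prod, abs_prod, prod_div_distrib, erase_right_comm]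
  calc _ ≤ (∏ m ∈ ((Icc (-(N : ℤ)) N).erase k).erase j, |sin ((k - m) * t + v m)|) /
        ∏ d ∈ Icc 1 N, sin (d * t - 2 * α * t) * sin (d * t) :=
        div_le_div_of_nonneg_left (prod_nonneg fun _ _ => abs_nonneg _) hQ hQB
    _ ≤ _ := by
        rw [one_div_mul_eq_div, div_right_comm]
        exact (div_le_div_iff_of_pos_right hQ).mpr ((le_div_iff₀' hg0).mpr hgA)

end Lattice

theorem lagrange_residual_bound_general (α : ℝ) (hα0 : 0 ≤ α) (hα : α < 1/2)
    (N : ℕ)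
    (x : ℤ → ℝ) (hx : PerturbedNodes N α x)
    (j k : ℤ) (hj : j ∈ Finset.Icc (-(N:ℤ)) (N:ℤ)) (hk : k ∈ Finset.Icc (-(N:ℤ)) (N:ℤ))
    (hkj : k ≠ j) :
    |(∏ m ∈ ((Finset.Icc (-(N:ℤ)) (N:ℤ)).erase j).erase k,
        Real.sin (((x j + ((k : ℝ) - (j : ℝ)) * (2*π/(2*N+1))) - x m) / 2)) /
      (∏ m ∈ (Finset.Icc (-(N:ℤ)) (N:ℤ)).erase j, Real.sin ((x j - x m) / 2))| ≤
    (1 / Real.sin (((min |j - k| (2*(N:ℤ)+1 - |j - k|) : ℤ) : ℝ) * (2*π/(2*N+1)) / 2)) *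
      ∏ m ∈ Finset.Icc 1 N,
        (Real.sin (((m : ℝ) * (2*π/(2*N+1)) + α * (2*π/(2*N+1))) / 2))^2 /
          (Real.sin (((m : ℝ) * (2*π/(2*N+1)) - 2 * α * (2*π/(2*N+1))) / 2) *
            Real.sin ((m : ℝ) * (2*π/(2*N+1)) / 2)) := by
  set t : ℝ := π / (2 * N + 1) with ht_def
  have ht : (2 * N + 1) * t = π := by rw [ht_def]; field_simp
  have hh : 2 * π / (2 * N + 1) = 2 * t := by rw [ht_def]; ring
  rw [PerturbedNodes, hh] at hx
  have he : ∀ m ∈ Icc (-(N : ℤ)) N, |x m - m * (2 * t)| ≤ 2 * α * t :=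
    fun m hm => (hx m hm).trans_eq (by ring)
  set v : ℤ → ℝ := fun m => ((x j - j * (2 * t)) - (x m - m * (2 * t))) / 2
  have hv : ∀ m ∈ Icc (-(N : ℤ)) N, |v m| ≤ 2 * α * t :=
    fun m hm => abs_half_sub_le (he j hj) (he m hm)
  have hvv : ∀ m ∈ Icc (-(N : ℤ)) N, ∀ m' ∈ Icc (-(N : ℤ)) N, |v m - v m'| ≤ 2 * α * t :=
    fun m hm m' hm' => by convert abs_half_sub_le (he m' hm') (he m hm) using 2; ring
  have hkj' : |k - j| ≤ 2 * N := by
    rw [mem_Icc] at hj hk; rw [abs_le]; constructor <;> omega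
  rw [hh, abs_sub_comm j k]
  simp only [show ∀ y : ℝ, y * (2 * t) / 2 = y * t from fun y => by ring,
    show ∀ y : ℝ, (y * (2 * t) + α * (2 * t)) / 2 = y * t + α * t from fun y => by ring,
    show ∀ y : ℝ, (y * (2 * t) - 2 * α * (2 * t)) / 2 = y * t - 2 * α * t from fun y => by ring,
    show ∀ m : ℤ, (x j + (k - j) * (2 * t) - x m) / 2 = (k - m) * t + v m from fun m => by ring,
    show ∀ m : ℤ, (x j - x m) / 2 = (j - m) * t + v m from fun m => by ring,
    sin_min_mul_eq_abs_sin ht hkj', Int.cast_sub]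
  exact abs_prod_div_prod_le ht hα0 hα hv hvv hj hk hkj (by simp [v])

/-- bound on the ratio of sine products appearing in the Lagrange basis
polynomials at α-perturbed nodes, in terms of the circular index distance. -/
theorem lagrange_residual_bound (α : ℝ) (hα0 : 0 ≤ α) (hα : α < 1/2)
    (N : ℕ) (hN : 0 < N)
    (x : ℤ → ℝ) (hx : PerturbedNodes N α x)
    (j k : ℤ) (hj : j ∈ Finset.Icc (-(N:ℤ)) (N:ℤ)) (hk : k ∈ Finset.Icc (-(N:ℤ)) (N:ℤ))
    (hkj : k ≠ j) :
    |(∏ m ∈ ((Finset.Icc (-(N:ℤ)) (N:ℤ)).erase j).erase k,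
        Real.sin (((x j + ((k : ℝ) - (j : ℝ)) * (2*π/(2*N+1))) - x m) / 2)) /
      (∏ m ∈ (Finset.Icc (-(N:ℤ)) (N:ℤ)).erase j, Real.sin ((x j - x m) / 2))| ≤
    (1 / Real.sin (((min |j - k| (2*(N:ℤ)+1 - |j - k|) : ℤ) : ℝ) * (2*π/(2*N+1)) / 2)) *
      ∏ m ∈ Finset.Icc 1 N,
        (Real.sin (((m : ℝ) * (2*π/(2*N+1)) + α * (2*π/(2*N+1))) / 2))^2 /
          (Real.sin (((m : ℝ) * (2*π/(2*N+1)) - 2 * α * (2*π/(2*N+1))) / 2) *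
            Real.sin ((m : ℝ) * (2*π/(2*N+1)) / 2)) :=
  lagrange_residual_bound_general α hα0 hα N x hx j k hj hk hkj
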